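/- Lemma 1 (multivariate stochastic representation of the skew-normal): let λ ∈ ℝⁿ and δ = λ/√(1 + λᵀλ). Then I − δ·δᵀ is positive semidefinite with positive determinant, and if X₀ is a standard normal real random variable independent of an ℝⁿ-valued random vector X₁ whose components are i.i.d. standard normal, then W = |X₀|·δ + (I − δ·δᵀ)^{1/2}·X₁ has law absolutely continuous with respect to Lebesgue measure on ℝⁿ, with density w ↦ 2·φₙ(w; 0, I)·Φ(λᵀw). -/

import Mathlib

open MeasureTheory ProbabilityTheory Real Matrix

/-- The standard normal distribution function `Φ(x) = ∫_{-∞}^x (2π)^{-1/2} exp(-u²/2) du`. -/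
noncomputable def stdNormalCDF (x : ℝ) : ℝ :=
  ∫ u in Set.Iic x, (2 * π) ^ (-(1 : ℝ) / 2) * Real.exp (-u ^ 2 / 2)

/-- The `n`-dimensional normal density with mean `m` and positive definite covariance `V`:
`φₙ(y; m, V) = (2π)^{-n/2} (det V)^{-1/2} exp(-½ (y−m)ᵀ V⁻¹ (y−m))`. -/
noncomputable def mvNormalPDF {n : ℕ} (m : Fin n → ℝ) (V : Matrix (Fin n) (Fin n) ℝ)
    (y : Fin n → ℝ) : ℝ :=
  (2 * π) ^ (-(n : ℝ) / 2) * V.det ^ (-(1 : ℝ) / 2) *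
    Real.exp (-(1 / 2) * ((y - m) ⬝ᵥ (V⁻¹ *ᵥ (y - m))))

open Set
open scoped ENNReal

/-!
Conditionally on `X₀ = t`, the vector `W = |t| δ + S X₁` is Gaussian with mean `|t| δ` and
covariance `S Sᵀ = Σ := I − δ δᵀ`, so `W` has density `w ↦ ∫ φ(t) φₙ(w; |t| δ, Σ) dt`.
With `c = √(1 + λᵀλ)` one has `Σ⁻¹ = I + λ λᵀ` and `det Σ = c⁻²`; completing the square in `|t|`
gives `φ(t) φₙ(w; |t| δ, Σ) = c φₙ(w; 0, I) φ(c |t| − λᵀw)`, and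
`∫ φ(c |t| − a) dt = 2 Φ(a) / c`.
-/

lemma map_prod_eq_withDensity_lintegral {α β γ : Type*} [MeasurableSpace α] [MeasurableSpace β]
    [MeasurableSpace γ] {μ : Measure α} {ν : Measure β} {ν' : Measure γ} [SFinite μ] [SFinite ν]
    [SFinite ν'] {g : α × β → γ} (hg : Measurable g) {ρ : α → γ → ℝ≥0∞}
    (hρ : Measurable (Function.uncurry ρ))
    (h : ∀ a, ν.map (fun b ↦ g (a, b)) = ν'.withDensity (ρ a)) :
    (μ.prod ν).map g = ν'.withDensity fun w ↦ ∫⁻ a, ρ a w ∂μ := by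
  ext s hs
  rw [Measure.map_apply hg hs, Measure.prod_apply (hg hs), withDensity_apply _ hs,
    ← lintegral_lintegral_swap hρ.aemeasurable]
  refine lintegral_congr fun a ↦ ?_
  rw [← withDensity_apply _ hs, ← h]
  exact (Measure.map_apply (hg.comp measurable_prodMk_left) hs).symm

lemma lintegral_fin_nat_prod_eq_prod {n : ℕ} {E : Type*} [MeasurableSpace E] {μ : Measure E}
    [SigmaFinite μ] {f : Fin n → E → ℝ≥0∞} (hf : ∀ i, Measurable (f i)) :
    ∫⁻ x, ∏ i, f i (x i) ∂(Measure.pi fun _ ↦ μ) = ∏ i, ∫⁻ x, f i x ∂μ := by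
  induction n with
  | zero => simp
  | succ n ih =>
    have hprod : Measurable fun y : Fin n → E ↦ ∏ i, f i.succ (y i) :=
      Finset.measurable_prod _ fun i _ ↦ (hf i.succ).comp (measurable_pi_apply i)
    have hsplit : Measurable fun p : E × (Fin n → E) ↦ f 0 p.1 * ∏ i : Fin n, f i.succ (p.2 i) :=
      ((hf 0).comp measurable_fst).mul (hprod.comp measurable_snd)
    calc ∫⁻ x, ∏ i, f i (x i) ∂(Measure.pi fun _ ↦ μ)
        = ∫⁻ p, f 0 p.1 * ∏ i : Fin n, f i.succ (p.2 i) ∂(μ.prod (Measure.pi fun _ ↦ μ)) := by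
          rw [← (measurePreserving_piFinSuccAbove (fun _ : Fin (n + 1) ↦ μ) 0).lintegral_comp
            hsplit]
          simp_rw [Fin.prod_univ_succ]
          rfl
      _ = (∫⁻ x, f 0 x ∂μ) * ∏ i : Fin n, ∫⁻ x, f i.succ x ∂μ := by
          rw [lintegral_prod_mul (hf 0).aemeasurable hprod.aemeasurable, ih fun i ↦ hf i.succ]
      _ = ∏ i, ∫⁻ x, f i x ∂μ := (Fin.prod_univ_succ fun i ↦ ∫⁻ x, f i x ∂μ).symm

lemma lintegral_comp_add_mulVec {n : ℕ} {A : Matrix (Fin n) (Fin n) ℝ} (hA : A.det ≠ 0)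
    (b : Fin n → ℝ) {h : (Fin n → ℝ) → ℝ≥0∞} (hh : Measurable h) :
    ∫⁻ x, h (b + A *ᵥ x) = ENNReal.ofReal |A.det|⁻¹ * ∫⁻ y, h y := by
  have hA' : Measurable (toLin' A) := (toLin' A).continuous_of_finiteDimensional.measurable
  rw [← lintegral_add_left_eq_self h b, ← abs_inv, ← smul_eq_mul, ← lintegral_smul_measure,
    ← Real.map_matrix_volume_pi_eq_smul_volume_pi hA]
  exact (lintegral_map (f := fun y ↦ h (b + y)) (hh.comp (measurable_const_add b)) hA').symm

lemma map_add_mulVec_withDensity {n : ℕ} {A : Matrix (Fin n) (Fin n) ℝ} (hA : A.det ≠ 0)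
    (b : Fin n → ℝ) {f : (Fin n → ℝ) → ℝ≥0∞} (hf : Measurable f) :
    (volume.withDensity f).map (fun x ↦ b + A *ᵥ x) =
      volume.withDensity fun y ↦ ENNReal.ofReal |A.det|⁻¹ * f (A⁻¹ *ᵥ (y - b)) := by
  have hmeas : Measurable fun x : Fin n → ℝ ↦ b + A *ᵥ x :=
    measurable_const_add b |>.comp (toLin' A).continuous_of_finiteDimensional.measurable
  have hf' : Measurable fun y ↦ f (A⁻¹ *ᵥ (y - b)) :=
    hf.comp <| (toLin' A⁻¹).continuous_of_finiteDimensional.measurable.comp (measurable_sub_const b)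
  ext s hs
  rw [Measure.map_apply hmeas hs, withDensity_apply _ (hmeas hs), withDensity_apply _ hs,
    lintegral_const_mul _ hf', ← lintegral_indicator (hmeas hs),
    ← lintegral_indicator hs, ← lintegral_comp_add_mulVec hA b (hf'.indicator hs)]
  refine lintegral_congr fun x ↦ ?_
  classical
  simp [Set.indicator_apply, mulVec_mulVec, nonsing_inv_mul A hA.isUnit]

lemma mvNormalPDF_zero_one_eq_prod {n : ℕ} (x : Fin n → ℝ) :
    mvNormalPDF 0 1 x = ∏ i, gaussianPDFReal 0 1 (x i) := by
  simp only [mvNormalPDF, gaussianPDFReal, Finset.prod_mul_distrib, Finset.prod_const,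
    ← Real.exp_sum, det_one, one_rpow, inv_one, one_mulVec, sub_zero, NNReal.coe_one, mul_one,
    Finset.card_univ, Fintype.card_fin, dotProduct, Finset.mul_sum]
  congr 1
  · rw [sqrt_eq_rpow, ← rpow_neg (by positivity), ← rpow_natCast, ← rpow_mul (by positivity)]
    ring_nf
  · exact congrArg rexp (Finset.sum_congr rfl fun i _ ↦ by ring)

lemma pi_gaussianReal_eq_withDensity (n : ℕ) :
    Measure.pi (fun _ : Fin n ↦ gaussianReal 0 1) =
      volume.withDensity fun x ↦ ENNReal.ofReal (mvNormalPDF 0 1 x) := by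
  classical
  refine Measure.pi_eq fun s hs ↦ ?_
  have hind : ∀ x : Fin n → ℝ,
      (univ.pi s).indicator (fun x ↦ ENNReal.ofReal (mvNormalPDF 0 1 x)) x =
        ∏ i, (s i).indicator (gaussianPDF 0 1) (x i) := by
    intro x
    simp only [Set.indicator_apply, Finset.prod_ite_zero, Set.mem_univ_pi, Finset.mem_univ,
      true_imp_iff, mvNormalPDF_zero_one_eq_prod, gaussianPDF,
      ENNReal.ofReal_prod_of_nonneg fun i _ ↦ gaussianPDFReal_nonneg 0 1 (x i)]
  rw [withDensity_apply _ (MeasurableSet.univ_pi hs),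
    ← lintegral_indicator (MeasurableSet.univ_pi hs), lintegral_congr hind, volume_pi,
    lintegral_fin_nat_prod_eq_prod fun i ↦ (measurable_gaussianPDF 0 1).indicator (hs i)]
  refine Finset.prod_congr rfl fun i _ ↦ ?_
  rw [gaussianReal_apply 0 one_ne_zero, lintegral_indicator (hs i)]

lemma continuous_mvNormalPDF {n : ℕ} (V : Matrix (Fin n) (Fin n) ℝ) :
    Continuous fun p : (Fin n → ℝ) × (Fin n → ℝ) ↦ mvNormalPDF p.1 V p.2 := by
  unfold mvNormalPDF
  fun_prop

lemma mvNormalPDF_mul_transpose {n : ℕ} (A : Matrix (Fin n) (Fin n) ℝ) (b y : Fin n → ℝ) :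
    mvNormalPDF b (A * Aᵀ) y = |A.det|⁻¹ * mvNormalPDF 0 1 (A⁻¹ *ᵥ (y - b)) := by
  have hdet : (A * Aᵀ).det ^ (-(1 : ℝ) / 2) = |A.det|⁻¹ := by
    rw [det_mul, det_transpose, ← sqrt_mul_self_eq_abs, sqrt_eq_rpow,
      ← rpow_neg (mul_self_nonneg _)]
    ring_nf
  have hquad : (y - b) ⬝ᵥ ((A * Aᵀ)⁻¹ *ᵥ (y - b)) = (A⁻¹ *ᵥ (y - b)) ⬝ᵥ (A⁻¹ *ᵥ (y - b)) := by
    rw [Matrix.mul_inv_rev, ← transpose_nonsing_inv, ← mulVec_mulVec, dotProduct_mulVec,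
      vecMul_transpose]
  simp only [mvNormalPDF, hdet, hquad, det_one, one_rpow, inv_one, one_mulVec, sub_zero]
  ring

lemma map_add_mulVec_pi_gaussianReal {n : ℕ} {A : Matrix (Fin n) (Fin n) ℝ} (hA : A.det ≠ 0)
    (b : Fin n → ℝ) :
    (Measure.pi fun _ : Fin n ↦ gaussianReal 0 1).map (fun x ↦ b + A *ᵥ x) =
      volume.withDensity fun y ↦ ENNReal.ofReal (mvNormalPDF b (A * Aᵀ) y) := by
  have hmeas : Measurable fun x : Fin n → ℝ ↦ ENNReal.ofReal (mvNormalPDF 0 1 x) :=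
    ((continuous_mvNormalPDF 1).comp (Continuous.prodMk_right 0)).measurable.ennreal_ofReal
  rw [pi_gaussianReal_eq_withDensity, map_add_mulVec_withDensity hA b hmeas]
  simp_rw [mvNormalPDF_mul_transpose, ENNReal.ofReal_mul (inv_nonneg.mpr (abs_nonneg _))]

lemma map_abs_smul_add_mulVec_prod_gaussianReal {n : ℕ} {S : Matrix (Fin n) (Fin n) ℝ}
    (hS : S.det ≠ 0) (δ : Fin n → ℝ) :
    ((gaussianReal 0 1).prod (Measure.pi fun _ : Fin n ↦ gaussianReal 0 1)).map
        (fun p ↦ |p.1| • δ + S *ᵥ p.2) =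
      volume.withDensity fun w ↦
        ∫⁻ t, ENNReal.ofReal (mvNormalPDF (|t| • δ) (S * Sᵀ) w) ∂gaussianReal 0 1 := by
  refine map_prod_eq_withDensity_lintegral (by fun_prop) ?_ fun t ↦
    map_add_mulVec_pi_gaussianReal hS (|t| • δ)
  exact ((continuous_mvNormalPDF _).comp (((continuous_abs.comp continuous_fst).smul
    continuous_const).prodMk continuous_snd)).measurable.ennreal_ofReal

lemma stdNormalCDF_eq_integral_gaussianPDFReal (a : ℝ) :
    stdNormalCDF a = ∫ u in Iic a, gaussianPDFReal 0 1 u := by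
  refine setIntegral_congr_fun measurableSet_Iic fun u _ ↦ ?_
  simp only [gaussianPDFReal_def, NNReal.coe_one, mul_one, sub_zero, sqrt_eq_rpow,
    ← rpow_neg (by positivity : (0 : ℝ) ≤ 2 * π)]
  ring_nf

lemma setIntegral_Ioi_comp_sub_right {E : Type*} [NormedAddCommGroup E] [NormedSpace ℝ E]
    (f : ℝ → E) (a b : ℝ) : ∫ x in Ioi a, f (x - b) = ∫ x in Ioi (a - b), f x := by
  have h := (measurePreserving_sub_right volume b).setIntegral_preimage_emb
    (measurableEmbedding_subRight b) f (Ioi (a - b))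
  rwa [show (· - b) ⁻¹' Ioi (a - b) = Ioi a by ext; simp] at h

lemma integrable_gaussianPDFReal_mul_abs_sub {c : ℝ} (hc : 0 < c) (a : ℝ) :
    Integrable fun t ↦ gaussianPDFReal 0 1 (c * |t| - a) := by
  have hpos : Integrable fun t ↦ gaussianPDFReal 0 1 (c * t - a) :=
    ((integrable_gaussianPDFReal 0 1).comp_sub_right a).comp_mul_left' hc.ne'
  refine (hpos.add hpos.comp_neg).mono'
    ((measurable_gaussianPDFReal 0 1).comp (by fun_prop)).aestronglyMeasurable
    (ae_of_all _ fun t ↦ ?_)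
  have h₁ := gaussianPDFReal_nonneg 0 1 (c * t - a)
  have h₂ := gaussianPDFReal_nonneg 0 1 (c * -t - a)
  rw [Real.norm_of_nonneg (gaussianPDFReal_nonneg _ _ _)]
  rcases abs_choice t with h | h <;> simp only [h, Pi.add_apply] <;> linarith

lemma integral_gaussianPDFReal_mul_abs_sub {c : ℝ} (hc : 0 < c) (a : ℝ) :
    ∫ t, gaussianPDFReal 0 1 (c * |t| - a) = 2 * c⁻¹ * stdNormalCDF a := by
  have hsymm : ∀ u, gaussianPDFReal 0 1 (-u) = gaussianPDFReal 0 1 u := fun u ↦ by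
    simp [gaussianPDFReal_def]
  calc ∫ t, gaussianPDFReal 0 1 (c * |t| - a)
      = 2 * ∫ t in Ioi 0, gaussianPDFReal 0 1 (c * t - a) :=
        integral_comp_abs (f := fun t ↦ gaussianPDFReal 0 1 (c * t - a))
    _ = 2 * (c⁻¹ * ∫ u in Ioi 0, gaussianPDFReal 0 1 (u - a)) := by
        rw [integral_comp_mul_left_Ioi (fun u ↦ gaussianPDFReal 0 1 (u - a)) 0 hc, mul_zero,
          smul_eq_mul]
    _ = 2 * (c⁻¹ * ∫ u in Ioi (-a), gaussianPDFReal 0 1 (-u)) := by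
        rw [setIntegral_Ioi_comp_sub_right, zero_sub]
        simp_rw [hsymm]
    _ = 2 * c⁻¹ * stdNormalCDF a := by
        rw [integral_comp_neg_Ioi, neg_neg, stdNormalCDF_eq_integral_gaussianPDFReal, mul_assoc]

noncomputable def skewNormalDirection {n : ℕ} (lam : Fin n → ℝ) : Fin n → ℝ :=
  (√(1 + lam ⬝ᵥ lam))⁻¹ • lam

section SkewNormal

variable {n : ℕ} (lam : Fin n → ℝ)

lemma one_add_dotProduct_self_pos : 0 < 1 + lam ⬝ᵥ lam := by
  have := dotProduct_self_star_nonneg lam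
  rw [star_trivial] at this
  linarith

lemma one_sub_vecMulVec_skewNormalDirection_mul :
    (1 - vecMulVec (skewNormalDirection lam) (skewNormalDirection lam)) *
      (1 + vecMulVec lam lam) = 1 := by
  have hc : (√(1 + lam ⬝ᵥ lam))⁻¹ * (√(1 + lam ⬝ᵥ lam))⁻¹ * (1 + lam ⬝ᵥ lam) = 1 := by
    rw [← mul_inv, mul_self_sqrt (one_add_dotProduct_self_pos lam).le,
      inv_mul_cancel₀ (one_add_dotProduct_self_pos lam).ne']
  have hsq : vecMulVec lam lam * vecMulVec lam lam = (lam ⬝ᵥ lam) • vecMulVec lam lam := by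
    rw [vecMulVec_mul_vecMulVec, vecMulVec_smul]
  rw [skewNormalDirection, smul_vecMulVec, vecMulVec_smul, smul_smul, sub_mul, one_mul, mul_add,
    mul_one, smul_mul, hsq, smul_smul, ← add_smul, ← mul_one_add, hc, one_smul,
    add_sub_cancel_right]

lemma inv_one_sub_vecMulVec_skewNormalDirection :
    (1 - vecMulVec (skewNormalDirection lam) (skewNormalDirection lam))⁻¹ =
      1 + vecMulVec lam lam :=
  inv_eq_right_inv (one_sub_vecMulVec_skewNormalDirection_mul lam)

lemma posDef_one_sub_vecMulVec_skewNormalDirection :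
    (1 - vecMulVec (skewNormalDirection lam) (skewNormalDirection lam)).PosDef := by
  rw [← inv_eq_left_inv (one_sub_vecMulVec_skewNormalDirection_mul lam)]
  have h := posSemidef_vecMulVec_self_star lam
  rw [star_trivial] at h
  exact (PosDef.one.add_posSemidef h).inv

lemma det_one_sub_vecMulVec_skewNormalDirection :
    (1 - vecMulVec (skewNormalDirection lam) (skewNormalDirection lam)).det =
      (1 + lam ⬝ᵥ lam)⁻¹ := by
  have h := congrArg det (one_sub_vecMulVec_skewNormalDirection_mul lam)
  rw [det_mul, det_one, vecMulVec_eq Unit lam lam, det_one_add_replicateCol_mul_replicateRow] at h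
  exact eq_inv_of_mul_eq_one_left h

lemma dotProduct_mulVec_sub_smul_skewNormalDirection_add_sq (u : ℝ) (w : Fin n → ℝ) :
    (w - u • skewNormalDirection lam) ⬝ᵥ
        ((1 + vecMulVec lam lam) *ᵥ (w - u • skewNormalDirection lam)) + u ^ 2 =
      (√(1 + lam ⬝ᵥ lam) * u - lam ⬝ᵥ w) ^ 2 + w ⬝ᵥ w := by
  have hpos := one_add_dotProduct_self_pos lam
  have hc : √(1 + lam ⬝ᵥ lam) ^ 2 = 1 + lam ⬝ᵥ lam := sq_sqrt hpos.le
  have hc0 : √(1 + lam ⬝ᵥ lam) ≠ 0 := (sqrt_pos.2 hpos).ne'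
  simp only [skewNormalDirection, add_mulVec, one_mulVec, vecMulVec_mulVec, dotProduct_add,
    dotProduct_sub, sub_dotProduct, dotProduct_smul, smul_dotProduct, smul_eq_mul, op_smul_eq_smul,
    dotProduct_comm w lam]
  set c := √(1 + lam ⬝ᵥ lam)
  generalize lam ⬝ᵥ lam = L at *
  obtain rfl : L = c ^ 2 - 1 := by linarith
  field_simp
  ring

lemma gaussianPDFReal_mul_mvNormalPDF_abs_smul_skewNormalDirection (t : ℝ) (w : Fin n → ℝ) :
    gaussianPDFReal 0 1 t * mvNormalPDF (|t| • skewNormalDirection lam)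
        (1 - vecMulVec (skewNormalDirection lam) (skewNormalDirection lam)) w =
      √(1 + lam ⬝ᵥ lam) * mvNormalPDF 0 1 w *
        gaussianPDFReal 0 1 (√(1 + lam ⬝ᵥ lam) * |t| - lam ⬝ᵥ w) := by
  have hpos := one_add_dotProduct_self_pos lam
  have hdet : (1 - vecMulVec (skewNormalDirection lam) (skewNormalDirection lam)).det ^
      (-(1 : ℝ) / 2) = √(1 + lam ⬝ᵥ lam) := by
    rw [det_one_sub_vecMulVec_skewNormalDirection, inv_rpow hpos.le, ← rpow_neg hpos.le,
      sqrt_eq_rpow]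
    ring_nf
  have hexp : rexp (-t ^ 2 / 2) * rexp (-(1 / 2) * ((w - |t| • skewNormalDirection lam) ⬝ᵥ
        ((1 + vecMulVec lam lam) *ᵥ (w - |t| • skewNormalDirection lam)))) =
      rexp (-(1 / 2) * (w ⬝ᵥ w)) * rexp (-(√(1 + lam ⬝ᵥ lam) * |t| - lam ⬝ᵥ w) ^ 2 / 2) := by
    rw [← exp_add, ← exp_add]
    have := dotProduct_mulVec_sub_smul_skewNormalDirection_add_sq lam |t| w
    rw [sq_abs] at this
    congr 1
    linarith
  simp only [mvNormalPDF, gaussianPDFReal_def, hdet, inv_one_sub_vecMulVec_skewNormalDirection,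
    det_one, one_rpow, inv_one, one_mulVec, sub_zero, NNReal.coe_one, mul_one]
  linear_combination ((√(2 * π))⁻¹ * (2 * π) ^ (-(n : ℝ) / 2) * √(1 + lam ⬝ᵥ lam)) * hexp

lemma lintegral_mvNormalPDF_abs_smul_skewNormalDirection (w : Fin n → ℝ) :
    ∫⁻ t, ENNReal.ofReal (mvNormalPDF (|t| • skewNormalDirection lam)
        (1 - vecMulVec (skewNormalDirection lam) (skewNormalDirection lam)) w) ∂gaussianReal 0 1 =
      ENNReal.ofReal (2 * mvNormalPDF 0 1 w * stdNormalCDF (lam ⬝ᵥ w)) := by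
  have hc := sqrt_pos.2 (one_add_dotProduct_self_pos lam)
  have hmeas : Measurable fun t : ℝ ↦ ENNReal.ofReal (mvNormalPDF (|t| • skewNormalDirection lam)
      (1 - vecMulVec (skewNormalDirection lam) (skewNormalDirection lam)) w) :=
    ((continuous_mvNormalPDF _).comp ((continuous_abs.smul continuous_const).prodMk
      continuous_const)).measurable.ennreal_ofReal
  have hφ : 0 ≤ mvNormalPDF 0 1 w := by
    rw [mvNormalPDF_zero_one_eq_prod]
    exact Finset.prod_nonneg fun i _ ↦ gaussianPDFReal_nonneg 0 1 (w i)
  rw [gaussianReal_of_var_ne_zero 0 one_ne_zero,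
    lintegral_withDensity_eq_lintegral_mul _ (measurable_gaussianPDF 0 1) hmeas]
  simp only [Pi.mul_apply, gaussianPDF, ← ENNReal.ofReal_mul (gaussianPDFReal_nonneg _ _ _),
    gaussianPDFReal_mul_mvNormalPDF_abs_smul_skewNormalDirection]
  rw [← ofReal_integral_eq_lintegral_ofReal
      ((integrable_gaussianPDFReal_mul_abs_sub hc _).const_mul _)
      (ae_of_all _ fun t ↦ mul_nonneg (mul_nonneg hc.le hφ) (gaussianPDFReal_nonneg _ _ _)),
    integral_const_mul, integral_gaussianPDFReal_mul_abs_sub hc]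
  congr 1
  field_simp

end SkewNormal

/-- Lemma 1 (multivariate stochastic representation of the skew-normal): with
`δ = λ/√(1+λᵀλ)`, the matrix `I − δδᵀ` is positive semidefinite with positive determinant,
and if `S` is its positive semidefinite square root, `X₀` a standard normal real random
variable independent of `X₁` with i.i.d. standard normal components, then
`W = |X₀|·δ + S·X₁` has density `w ↦ 2·φₙ(w; 0, I)·Φ(λᵀw)` w.r.t. Lebesgue measure. -/
theorem mv_skewNormal_stochastic_representation {n : ℕ}
    {Ω : Type*} [MeasurableSpace Ω] (P : Measure Ω) [IsProbabilityMeasure P]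
    (lam δ : Fin n → ℝ) (hδ : δ = (Real.sqrt (1 + lam ⬝ᵥ lam))⁻¹ • lam)
    (S : Matrix (Fin n) (Fin n) ℝ) (hS : S.PosSemidef)
    (hSsq : S * S = 1 - vecMulVec δ δ)
    (X₀ : Ω → ℝ) (X₁ : Ω → (Fin n → ℝ)) (hX₀ : Measurable X₀) (hX₁ : Measurable X₁)
    (hindep : IndepFun X₀ X₁ P)
    (hlaw₀ : Measure.map X₀ P = gaussianReal 0 1)
    (hlaw₁ : Measure.map X₁ P = Measure.pi fun _ : Fin n => gaussianReal 0 1) :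
    ((1 : Matrix (Fin n) (Fin n) ℝ) - vecMulVec δ δ).PosSemidef ∧
    0 < ((1 : Matrix (Fin n) (Fin n) ℝ) - vecMulVec δ δ).det ∧
    Measure.map (fun ω => |X₀ ω| • δ + S *ᵥ X₁ ω) P =
      volume.withDensity (fun w =>
        ENNReal.ofReal (2 * mvNormalPDF 0 1 w * stdNormalCDF (lam ⬝ᵥ w))) := by
  obtain rfl : δ = skewNormalDirection lam := hδ
  have hSdet : S.det ≠ 0 := by
    have h := det_one_sub_vecMulVec_skewNormalDirection lam
    rw [← hSsq, det_mul] at h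
    exact left_ne_zero_of_mul (h ▸ inv_ne_zero (one_add_dotProduct_self_pos lam).ne')
  have hSSt : S * Sᵀ = 1 - vecMulVec (skewNormalDirection lam) (skewNormalDirection lam) := by
    rw [← conjTranspose_eq_transpose_of_trivial, hS.1.eq, hSsq]
  have hpair : P.map (fun ω ↦ (X₀ ω, X₁ ω)) =
      (gaussianReal 0 1).prod (Measure.pi fun _ : Fin n ↦ gaussianReal 0 1) := by
    rw [← hlaw₁, ← hlaw₀]
    exact hindep.map_prod_eq_prod_map_map hX₀.aemeasurable hX₁.aemeasurable
  refine ⟨(posDef_one_sub_vecMulVec_skewNormalDirection lam).posSemidef, ?_, ?_⟩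
  · rw [det_one_sub_vecMulVec_skewNormalDirection]
    exact inv_pos.2 (one_add_dotProduct_self_pos lam)
  have hW : Measurable fun p : ℝ × (Fin n → ℝ) ↦ |p.1| • skewNormalDirection lam + S *ᵥ p.2 := by
    fun_prop
  refine (Measure.map_map hW (hX₀.prodMk hX₁)).symm.trans ?_
  rw [hpair, map_abs_smul_add_mulVec_prod_gaussianReal hSdet, hSSt]
  simp_rw [lintegral_mvNormalPDF_abs_smul_skewNormalDirection]
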